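/- arXiv:2104.03384 — 3 statements merged into one kernel-verified Lean document; each statement's English description precedes it below -/
import Mathlib

section
/- Under the hypotheses of the cell problem identity, the effective diffusion matrix D = (1/Z)∫_{𝕋^d} M e^{-V₁}(I + ∇_z χ) dz, with Z = ∫_{𝕋^d} e^{-V₁} dz, satisfies D = M - (1/Z)∫_{𝕋^d} (∇_z χ)ᵀ M (∇_z χ) e^{-V₁} dz; consequently ⟨ζ, D ζ⟩ ≤ ⟨ζ, M ζ⟩ for all ζ ∈ ℝ^d. -/
open Matrix MeasureTheory Real

attribute [local instance] Matrix.frobeniusNormedAddCommGroup Matrix.frobeniusNormedSpace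

/-- The unit cube `[0,1]^d`, a fundamental domain of the torus `𝕋^d`. -/
def unitCube (d : ℕ) : Set (Fin d → ℝ) := Set.univ.pi fun _ => Set.Icc (0 : ℝ) 1

/-- The Jacobian matrix of `χ : ℝ^d → ℝ^d`: entry `(j, i)` is `∂_j χ_i`. -/
noncomputable def jacMat {d : ℕ} (χ : (Fin d → ℝ) → (Fin d → ℝ)) (z : Fin d → ℝ) :
    Matrix (Fin d) (Fin d) ℝ :=
  Matrix.of fun j i => fderiv ℝ (fun w => χ w i) z (Pi.single j 1)

/-- Divergence of a vector field on `ℝ^d`. -/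
noncomputable def divg {d : ℕ} (F : (Fin d → ℝ) → (Fin d → ℝ)) (z : Fin d → ℝ) : ℝ :=
  ∑ j, fderiv ℝ (fun w => F w j) z (Pi.single j 1)

private noncomputable instance matContinuousENorm {d : ℕ} : ContinuousENorm (Matrix (Fin d) (Fin d) ℝ) :=
  SeminormedAddGroup.toContinuousENorm


private lemma fderiv_shift {E F : Type*} [NormedAddCommGroup E] [NormedSpace ℝ E]
    [NormedAddCommGroup F] [NormedSpace ℝ F] {g : E → F} (hg : Differentiable ℝ g)
    (c : E) (hgc : ∀ w, g (w + c) = g w) (z : E) :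
    fderiv ℝ g (z + c) = fderiv ℝ g z := by
  have h1 : HasFDerivAt (fun w => g (w + c)) (fderiv ℝ g (z + c)) z := by
    have := ((hg (z + c)).hasFDerivAt.comp z
      ((hasFDerivAt_id z).add_const c))
    simpa [Function.comp_def] using this
  have h2 : HasFDerivAt g (fderiv ℝ g (z + c)) z := by
    have hgg : (fun w => g (w + c)) = g := funext hgc
    rwa [hgg] at h1
  exact h2.fderiv.symm

private lemma integral_entry {d : ℕ} (f : (Fin d → ℝ) → Matrix (Fin d) (Fin d) ℝ)
    (hf : IntegrableOn f (unitCube d)) (k i : Fin d) :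
    (∫ z in unitCube d, f z) k i = ∫ z in unitCube d, f z k i := by
  have hf' : Integrable f (volume.restrict (unitCube d)) := hf
  let L : Matrix (Fin d) (Fin d) ℝ →L[ℝ] ℝ := LinearMap.toContinuousLinearMap
    ((LinearMap.proj i).comp (LinearMap.proj k : Matrix (Fin d) (Fin d) ℝ →ₗ[ℝ] (Fin d → ℝ)))
  have h2 : ∫ z in unitCube d, L (f z) = L (∫ z in unitCube d, f z) := L.integral_comp_comm hf'
  exact h2.symm

private lemma unitCube_eq_Icc (d : ℕ) : unitCube d = Set.Icc (0 : Fin d → ℝ) 1 := by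
  ext x
  simp [unitCube, Set.mem_pi, Set.mem_Icc, Pi.le_def, forall_and]

private lemma integral_divg_zero {d : ℕ} (G : (Fin d → ℝ) → (Fin d → ℝ))
    (hG : ContDiff ℝ (⊤ : ℕ∞) G) (hper : ∀ z (j : Fin d), G (z + Pi.single j 1) = G z) :
    ∫ z in unitCube d, divg G z = 0 := by
  cases d with
  | zero => simp [divg]
  | succ n =>
    have hGi : ∀ i, ContDiff ℝ (⊤ : ℕ∞) fun w => G w i := fun i =>
      (ContinuousLinearMap.proj i : (Fin (n+1) → ℝ) →L[ℝ] ℝ).contDiff.comp hG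
    have hd : ∀ i, Differentiable ℝ fun w => G w i := fun i => (hGi i).differentiable (by simp)
    have hcont : ∀ i, Continuous fun z => fderiv ℝ (fun w => G w i) z (Pi.single i 1) :=
      fun i => (((hGi i).fderiv_right (m := (⊤ : ℕ∞)) (by simp)).clm_apply contDiff_const).continuous
    have key := MeasureTheory.integral_divergence_of_hasFDerivAt_off_countable'
      (0 : Fin (n+1) → ℝ) 1 (fun i => zero_le_one)
      (fun i w => G w i) (fun i x => fderiv ℝ (fun w => G w i) x) ∅ Set.countable_empty
      (fun i => ((continuous_apply i).comp hG.continuous).continuousOn)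
      (fun x _ i => ((hd i) x).hasFDerivAt)
      (((continuous_finset_sum Finset.univ fun i _ => hcont i)).integrableOn_Icc)
    rw [unitCube_eq_Icc]
    have hfront : ∀ (i : Fin (n+1)) (x : Fin n → ℝ),
        (Fin.insertNth i (1:ℝ) x : Fin (n+1) → ℝ)
          = (Fin.insertNth i (0:ℝ) x : Fin (n+1) → ℝ) + Pi.single i 1 := by
      intro i x
      funext j
      refine Fin.succAboveCases i ?_ ?_ j
      · simp
      · intro j
        simp [Fin.insertNth_apply_succAbove, Pi.single_eq_of_ne (Fin.succAbove_ne i j)]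
    have hrfl : ∫ x in Set.Icc (0 : Fin (n+1) → ℝ) 1, divg G x
        = ∫ x in Set.Icc (0 : Fin (n+1) → ℝ) 1, ∑ i, fderiv ℝ (fun w => G w i) x (Pi.single i 1) := rfl
    rw [hrfl, key]
    refine Finset.sum_eq_zero fun i _ => ?_
    rw [sub_eq_zero]
    refine setIntegral_congr_fun (measurableSet_Icc) fun x _ => ?_
    have h1 : ((1 : Fin (n+1) → ℝ) i) = (1:ℝ) := rfl
    have h0 : ((0 : Fin (n+1) → ℝ) i) = (0:ℝ) := rfl
    rw [h1, h0, hfront i x]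
    exact congrFun (hper _ i) i
private lemma divg_smul {d : ℕ} (f : (Fin d → ℝ) → ℝ) (F : (Fin d → ℝ) → (Fin d → ℝ))
    (hf : Differentiable ℝ f) (hF : ∀ j, Differentiable ℝ fun w => F w j) (z : Fin d → ℝ) :
    divg (fun w => f w • F w) z
      = (∑ j, F z j * fderiv ℝ f z (Pi.single j 1)) + f z * divg F z := by
  unfold divg
  rw [Finset.mul_sum, ← Finset.sum_add_distrib]
  refine Finset.sum_congr rfl fun j _ => ?_
  have h1 : (fun w => (f w • F w) j) = fun w => f w * F w j := rfl
  rw [h1, fderiv_fun_mul (hf z) ((hF j) z)]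
  simp only [ContinuousLinearMap.add_apply, ContinuousLinearMap.smul_apply, smul_eq_mul]
  ring

/-- The effective diffusion matrix `D = (1/Z)∫_{𝕋^d} M e^{-V₁}(I + ∇_z χ) dz`, with
`Z = ∫_{𝕋^d} e^{-V₁}`, satisfies
`D = M - (1/Z)∫ (∇_z χ)ᵀ M (∇_z χ) e^{-V₁} dz`, and consequently
`⟨ζ, D ζ⟩ ≤ ⟨ζ, M ζ⟩` for all `ζ ∈ ℝ^d`. -/
theorem stmt_4 {d : ℕ} (M : Matrix (Fin d) (Fin d) ℝ) (hM : M.PosSemidef)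
    (V₁ : (Fin d → ℝ) → ℝ) (hV₁ : ContDiff ℝ (⊤ : ℕ∞) V₁)
    (hV₁per : ∀ z (j : Fin d), V₁ (z + Pi.single j 1) = V₁ z)
    (χ : (Fin d → ℝ) → (Fin d → ℝ)) (hχ : ContDiff ℝ (⊤ : ℕ∞) χ)
    (hχper : ∀ z (j : Fin d), χ (z + Pi.single j 1) = χ z)
    (hcell : ∀ (i : Fin d) (z : Fin d → ℝ),
      divg (fun w => exp (-V₁ w) •
        (M *ᵥ (fun j => jacMat χ w j i + (1 : Matrix (Fin d) (Fin d) ℝ) j i))) z = 0)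
    (Z : ℝ) (hZdef : Z = ∫ z in unitCube d, exp (-V₁ z)) (hZ : 0 < Z)
    (D : Matrix (Fin d) (Fin d) ℝ)
    (hD : D = Z⁻¹ • ∫ z in unitCube d, exp (-V₁ z) • (M * (1 + jacMat χ z))) :
    D = M - Z⁻¹ • (∫ z in unitCube d, exp (-V₁ z) • ((jacMat χ z)ᵀ * M * jacMat χ z)) ∧
      ∀ ζ : Fin d → ℝ, ζ ⬝ᵥ (D *ᵥ ζ) ≤ ζ ⬝ᵥ (M *ᵥ ζ) := by
  classical
  have hcubemeas : MeasurableSet (unitCube d) := by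
    rw [unitCube_eq_Icc]; exact measurableSet_Icc
  -- component smoothness
  have hχi : ∀ i, ContDiff ℝ (⊤ : ℕ∞) fun w => χ w i := fun i =>
    (ContinuousLinearMap.proj i : (Fin d → ℝ) →L[ℝ] ℝ).contDiff.comp hχ
  have hχiper : ∀ (i : Fin d) (w) (j : Fin d), χ (w + Pi.single j 1) i = χ w i :=
    fun i w j => congrFun (hχper w j) i
  have hJc : ∀ l i, ContDiff ℝ (⊤ : ℕ∞) fun z => jacMat χ z l i := fun l i =>
    ((hχi i).fderiv_right (m := (⊤ : ℕ∞)) (by simp)).clm_apply contDiff_const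
  have hρc : ContDiff ℝ (⊤ : ℕ∞) fun z => exp (-V₁ z) := Real.contDiff_exp.comp hV₁.neg
  have hρper : ∀ z (j : Fin d), exp (-V₁ (z + Pi.single j 1)) = exp (-V₁ z) := by
    intro z j; rw [hV₁per]
  have hJper : ∀ z (j : Fin d), jacMat χ (z + Pi.single j 1) = jacMat χ z := by
    intro z j
    ext l i
    simp only [jacMat, Matrix.of_apply]
    rw [fderiv_shift ((hχi i).differentiable (by simp)) (Pi.single j 1)
      (fun w => hχiper i w j) z]
  -- continuity
  have hJcont : Continuous (jacMat χ) :=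
    continuous_pi fun l => continuous_pi fun i => (hJc l i).continuous
  have hρcont : Continuous fun z => exp (-V₁ z) := hρc.continuous
  have hIOnR : ∀ (g : (Fin d → ℝ) → ℝ), Continuous g → IntegrableOn g (unitCube d) := by
    intro g hg; rw [unitCube_eq_Icc]; exact hg.integrableOn_Icc
  have hIOnM : ∀ (g : (Fin d → ℝ) → Matrix (Fin d) (Fin d) ℝ), Continuous g →
      IntegrableOn g (unitCube d) := by
    intro g hg; rw [unitCube_eq_Icc]; exact hg.integrableOn_Icc
  have hintA : IntegrableOn (fun z => exp (-V₁ z) • (M * (1 + jacMat χ z))) (unitCube d) :=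
    hIOnM _ (hρcont.smul (continuous_const.matrix_mul (continuous_const.add hJcont)))
  have hintB : IntegrableOn (fun z => exp (-V₁ z) • ((jacMat χ z)ᵀ * M * jacMat χ z))
      (unitCube d) :=
    hIOnM _ (hρcont.smul ((hJcont.matrix_transpose.matrix_mul continuous_const).matrix_mul hJcont))
  -- symmetry of M
  have hMs : ∀ a b, M a b = M b a := by
    intro a b
    conv_lhs => rw [← hM.1]
    simp [Matrix.conjTranspose_apply]
  have hMt : Mᵀ = M := by ext a b; exact hMs b a
  have hjac : ∀ (l m : Fin d) z, fderiv ℝ (fun w => χ w m) z (Pi.single l 1) = jacMat χ z l m :=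
    fun _ _ _ => rfl
  -- KEY integration by parts identity
  have key : ∀ (i k : Fin d),
      ∫ z in unitCube d,
        exp (-V₁ z) * ((jacMat χ z)ᵀ * (M * (jacMat χ z + 1))) k i = 0 := by
    intro i k
    set F : (Fin d → ℝ) → (Fin d → ℝ) := fun w =>
      exp (-V₁ w) • (M *ᵥ (fun j => jacMat χ w j i + (1 : Matrix (Fin d) (Fin d) ℝ) j i))
      with hF
    have hFapp : ∀ w j, F w j
        = exp (-V₁ w) * ∑ l, M j l * (jacMat χ w l i + (1 : Matrix (Fin d) (Fin d) ℝ) l i) := by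
      intro w j; simp [hF, Matrix.mulVec, dotProduct]
    have hFc : ∀ j, ContDiff ℝ (⊤ : ℕ∞) fun w => F w j := by
      intro j
      have h2 : (fun w => F w j) = fun w =>
          exp (-V₁ w) * ∑ l, M j l * (jacMat χ w l i + (1 : Matrix (Fin d) (Fin d) ℝ) l i) :=
        funext fun w => hFapp w j
      rw [h2]
      exact hρc.mul (ContDiff.sum fun l _ => contDiff_const.mul ((hJc l i).add contDiff_const))
    have hG : ContDiff ℝ (⊤ : ℕ∞) fun w => χ w k • F w := by
      apply contDiff_pi.2
      intro j
      exact (hχi k).mul (hFc j)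
    have hGper : ∀ z (j : Fin d),
        (fun w => χ w k • F w) (z + Pi.single j 1) = (fun w => χ w k • F w) z := by
      intro z j
      have hFper : F (z + Pi.single j 1) = F z := by
        funext m; rw [hFapp, hFapp, hρper, hJper]
      simp only
      rw [hχiper k z j, hFper]
    have h0 := integral_divg_zero (fun w => χ w k • F w) hG hGper
    have hpt : ∀ z, divg (fun w => χ w k • F w) z
        = exp (-V₁ z) * ((jacMat χ z)ᵀ * (M * (jacMat χ z + 1))) k i := by
      intro z
      refine (divg_smul (fun w => χ w k) F ((hχi k).differentiable (by simp))
        (fun j => (hFc j).differentiable (by simp)) z).trans ?_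
      have hdF : divg F z = 0 := by rw [hF]; exact hcell i z
      rw [hdF, mul_zero, add_zero]
      simp only [hjac, hFapp, Matrix.mul_apply, Matrix.transpose_apply, Matrix.add_apply,
        Finset.mul_sum, Finset.sum_mul]
      refine Finset.sum_congr rfl fun j _ => ?_
      refine Finset.sum_congr rfl fun l _ => ?_
      ring
    simp only [hpt] at h0
    exact h0
  -- scalar continuity of entries
  have hc_entry : ∀ (g : (Fin d → ℝ) → Matrix (Fin d) (Fin d) ℝ), Continuous g →
      ∀ k i, Continuous fun z => g z k i := by
    intro g hg k i
    exact (continuous_apply i).comp ((continuous_apply k).comp hg)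
  have hcB : Continuous fun z => (jacMat χ z)ᵀ * M * jacMat χ z :=
    (hJcont.matrix_transpose.matrix_mul continuous_const).matrix_mul hJcont
  have hcMJ : Continuous fun z => M * jacMat χ z := continuous_const.matrix_mul hJcont
  have hcJM : Continuous fun z => (jacMat χ z)ᵀ * M := hJcont.matrix_transpose.matrix_mul continuous_const
  -- the heart: the matrix integral identity
  have hAeq : (∫ z in unitCube d, exp (-V₁ z) • (M * (1 + jacMat χ z)))
      = Z • M - ∫ z in unitCube d, exp (-V₁ z) • ((jacMat χ z)ᵀ * M * jacMat χ z) := by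
    ext k i
    rw [Matrix.sub_apply, Matrix.smul_apply, integral_entry _ hintA k i,
      integral_entry _ hintB k i, smul_eq_mul]
    simp only [Matrix.smul_apply, smul_eq_mul]
    have hsplit : ∀ z, (M * (1 + jacMat χ z)) k i = M k i + (M * jacMat χ z) k i := by
      intro z
      rw [Matrix.mul_add, Matrix.mul_one, Matrix.add_apply]
    have hIc1 : IntegrableOn (fun z => exp (-V₁ z) * M k i) (unitCube d) :=
      hIOnR _ (hρcont.mul continuous_const)
    have hIc2 : IntegrableOn (fun z => exp (-V₁ z) * (M * jacMat χ z) k i) (unitCube d) :=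
      hIOnR _ (hρcont.mul (hc_entry _ hcMJ k i))
    have hIc3 : IntegrableOn (fun z => exp (-V₁ z) * ((jacMat χ z)ᵀ * M * jacMat χ z) i k)
        (unitCube d) := hIOnR _ (hρcont.mul (hc_entry _ hcB i k))
    have hIc4 : IntegrableOn (fun z => exp (-V₁ z) * ((jacMat χ z)ᵀ * M) i k) (unitCube d) :=
      hIOnR _ (hρcont.mul (hc_entry _ hcJM i k))
    have step1 : ∫ z in unitCube d, exp (-V₁ z) * (M * (1 + jacMat χ z)) k i
        = Z * M k i + ∫ z in unitCube d, exp (-V₁ z) * (M * jacMat χ z) k i := by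
      have : (fun z => exp (-V₁ z) * (M * (1 + jacMat χ z)) k i)
          = fun z => exp (-V₁ z) * M k i + exp (-V₁ z) * (M * jacMat χ z) k i := by
        funext z; rw [hsplit z, mul_add]
      rw [this, integral_add hIc1 hIc2, integral_mul_const, ← hZdef]
    -- from KEY with indices (k, i) swapped
    have hexpand : ∀ z, ((jacMat χ z)ᵀ * (M * (jacMat χ z + 1)))
        = (jacMat χ z)ᵀ * M * jacMat χ z + (jacMat χ z)ᵀ * M := by
      intro z
      rw [Matrix.mul_add, Matrix.mul_one, Matrix.mul_add, Matrix.mul_assoc]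
    have hkey := key k i
    have hkey2 : (∫ z in unitCube d, exp (-V₁ z) * ((jacMat χ z)ᵀ * M * jacMat χ z) i k)
        + ∫ z in unitCube d, exp (-V₁ z) * ((jacMat χ z)ᵀ * M) i k = 0 := by
      rw [← integral_add hIc3 hIc4]
      rw [← hkey]
      refine setIntegral_congr_fun hcubemeas fun z _ => ?_
      rw [hexpand z, Matrix.add_apply, mul_add]
    -- pointwise symmetries
    have hsym : ∀ z, ((jacMat χ z)ᵀ * M * jacMat χ z) i k
        = ((jacMat χ z)ᵀ * M * jacMat χ z) k i := by
      intro z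
      have h1 : ((jacMat χ z)ᵀ * M * jacMat χ z)ᵀ = (jacMat χ z)ᵀ * M * jacMat χ z := by
        rw [Matrix.transpose_mul, Matrix.transpose_mul, Matrix.transpose_transpose, hMt,
          ← Matrix.mul_assoc]
      conv_lhs => rw [← h1]
      rw [Matrix.transpose_apply]
    have hMJswap : ∀ z, (M * jacMat χ z) k i = ((jacMat χ z)ᵀ * M) i k := by
      intro z
      simp only [Matrix.mul_apply, Matrix.transpose_apply]
      refine Finset.sum_congr rfl fun l _ => ?_
      rw [hMs k l, mul_comm]
    have step2 : ∫ z in unitCube d, exp (-V₁ z) * (M * jacMat χ z) k i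
        = - ∫ z in unitCube d, exp (-V₁ z) * ((jacMat χ z)ᵀ * M * jacMat χ z) k i := by
      have e1 : ∫ z in unitCube d, exp (-V₁ z) * (M * jacMat χ z) k i
          = ∫ z in unitCube d, exp (-V₁ z) * ((jacMat χ z)ᵀ * M) i k :=
        setIntegral_congr_fun hcubemeas fun z _ => by rw [hMJswap z]
      have e2 : ∫ z in unitCube d, exp (-V₁ z) * ((jacMat χ z)ᵀ * M * jacMat χ z) i k
          = ∫ z in unitCube d, exp (-V₁ z) * ((jacMat χ z)ᵀ * M * jacMat χ z) k i :=
        setIntegral_congr_fun hcubemeas fun z _ => by rw [hsym z]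
      rw [e1]
      rw [e2] at hkey2
      linarith
    rw [step1, step2]
    ring
  have part1 : D = M - Z⁻¹ •
      (∫ z in unitCube d, exp (-V₁ z) • ((jacMat χ z)ᵀ * M * jacMat χ z)) := by
    rw [hD, hAeq, smul_sub, smul_smul, inv_mul_cancel₀ hZ.ne', one_smul]
  refine ⟨part1, fun ζ => ?_⟩
  -- positivity of the correction term
  have hq : 0 ≤ ζ ⬝ᵥ ((∫ z in unitCube d,
      exp (-V₁ z) • ((jacMat χ z)ᵀ * M * jacMat χ z)) *ᵥ ζ) := by
    let L0 : Matrix (Fin d) (Fin d) ℝ →ₗ[ℝ] ℝ :=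
      { toFun := fun X => ζ ⬝ᵥ (X *ᵥ ζ)
        map_add' := by intro X Y; simp [Matrix.add_mulVec]
        map_smul' := by intro c X; simp [Matrix.smul_mulVec] }
    let L : Matrix (Fin d) (Fin d) ℝ →L[ℝ] ℝ := LinearMap.toContinuousLinearMap L0
    have hint : Integrable (fun z => exp (-V₁ z) • ((jacMat χ z)ᵀ * M * jacMat χ z))
        (volume.restrict (unitCube d)) := hintB
    have hLc := L.integral_comp_comm hint
    have hL : ∀ X : Matrix (Fin d) (Fin d) ℝ, L X = ζ ⬝ᵥ (X *ᵥ ζ) := fun X => rfl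
    rw [← hL]
    refine le_of_le_of_eq ?_ hLc
    apply setIntegral_nonneg hcubemeas
    intro z _
    show 0 ≤ ζ ⬝ᵥ ((exp (-V₁ z) • ((jacMat χ z)ᵀ * M * jacMat χ z)) *ᵥ ζ)
    have hps : 0 ≤ (jacMat χ z *ᵥ ζ) ⬝ᵥ (M *ᵥ (jacMat χ z *ᵥ ζ)) := by
      have := hM.dotProduct_mulVec_nonneg (jacMat χ z *ᵥ ζ)
      simpa using this
    have hrw : ζ ⬝ᵥ (((jacMat χ z)ᵀ * M * jacMat χ z) *ᵥ ζ)
        = (jacMat χ z *ᵥ ζ) ⬝ᵥ (M *ᵥ (jacMat χ z *ᵥ ζ)) := by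
      rw [Matrix.mul_assoc, ← Matrix.mulVec_mulVec, Matrix.dotProduct_mulVec,
        Matrix.vecMul_transpose, ← Matrix.mulVec_mulVec]
    rw [Matrix.smul_mulVec, dotProduct_smul, hrw, smul_eq_mul]
    exact mul_nonneg (exp_nonneg _) hps
  rw [part1, Matrix.sub_mulVec, dotProduct_sub, Matrix.smul_mulVec, dotProduct_smul,
    smul_eq_mul]
  have : 0 ≤ Z⁻¹ * (ζ ⬝ᵥ ((∫ z in unitCube d,
      exp (-V₁ z) • ((jacMat χ z)ᵀ * M * jacMat χ z)) *ᵥ ζ)) :=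
    mul_nonneg (inv_nonneg.2 hZ.le) hq
  linarith
end

section
/- Let V_ε(x) = V₀(x) + V₁(x/ε) where V₁ : 𝕋^d → ℝ is smooth with mean zero. Then for any bounded continuous f : ℝ^d → ℝ with e^{-V₀} f integrable and e^{-V₀} integrable, the normalized integral ∫ f e^{-V_ε} dx / ∫ e^{-V_ε} dx converges as ε → 0 to ∫ f e^{-V₀} Z̄ dx / ∫ e^{-V₀} Z̄ dx where Z̄ = ∫_{𝕋^d} e^{-V₁(z)} dz, which since Z̄ is a constant equals ∫ f e^{-V₀} dx / ∫ e^{-V₀} dx. -/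
open MeasureTheory Real Filter Pointwise

lemma unitCube_measurableSet (d : ℕ) : MeasurableSet (unitCube d) :=
  MeasurableSet.univ_pi fun _ => measurableSet_Icc

lemma unitCube_compact (d : ℕ) : IsCompact (unitCube d) :=
  isCompact_univ_pi fun _ => isCompact_Icc

lemma unitCube_volume (d : ℕ) : volume (unitCube d) = 1 := by
  rw [unitCube, volume_pi_pi]
  simp [Real.volume_Icc]

lemma mem_unitCube_fract {d : ℕ} (x : Fin d → ℝ) :
    (fun i => Int.fract (x i)) ∈ unitCube d := by
  intro i _
  exact ⟨Int.fract_nonneg _, (Int.fract_lt_one _).le⟩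

section helpers

variable {d : ℕ} {w : (Fin d → ℝ) → ℝ}

lemma per_int (hper : ∀ x (j : Fin d), w (x + Pi.single j 1) = w x)
    (m : Fin d → ℤ) (x : Fin d → ℝ) : w (x + fun i => (m i : ℝ)) = w x := by
  classical
  set S : AddSubgroup (Fin d → ℝ) :=
    { carrier := {v | ∀ y, w (y + v) = w y}
      zero_mem' := by intro y; simp
      add_mem' := by
        intro a b ha hb y
        rw [← add_assoc, hb, ha]
      neg_mem' := by
        intro a ha y
        have := ha (y + -a)
        rw [add_assoc, neg_add_cancel, add_zero] at this; exact this.symm } with hS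
  have hsingle : ∀ (j : Fin d) (n : ℤ), Pi.single j (n : ℝ) ∈ S := by
    intro j n
    have h1 : Pi.single j (1 : ℝ) ∈ S := fun y => hper y j
    have : Pi.single j ((n : ℝ)) = n • (Pi.single j (1 : ℝ) : Fin d → ℝ) := by
      funext i
      simp [Pi.single_apply]
    rw [this]
    exact zsmul_mem h1 n
  have hmem : (fun i => (m i : ℝ)) ∈ S := by
    have : (fun i => (m i : ℝ)) = ∑ j : Fin d, Pi.single j ((m j : ℝ)) := by
      funext i
      rw [Finset.sum_apply]
      simp [Pi.single_apply]
    rw [this]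
    exact sum_mem fun j _ => hsingle j (m j)
  exact hmem x

lemma per_bound (hw : Continuous w)
    (hper : ∀ x (j : Fin d), w (x + Pi.single j 1) = w x) :
    ∃ M : ℝ, 0 ≤ M ∧ ∀ x, |w x| ≤ M := by
  obtain ⟨z, hz, hzmax⟩ := (unitCube_compact d).exists_isMaxOn
    ⟨0, fun i _ => Set.mem_Icc.2 ⟨le_refl _, zero_le_one⟩⟩ (hw.abs.continuousOn)
  refine ⟨|w z|, abs_nonneg _, fun x => ?_⟩
  have h1 : w x = w (fun i => Int.fract (x i)) := by
    have := per_int hper (fun i => ⌊x i⌋) (fun i => Int.fract (x i))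
    rw [← this]
    congr 1
    funext i
    exact (Int.fract_add_floor (x i)).symm
  rw [h1]
  exact hzmax (mem_unitCube_fract x)


lemma per_integral_translate (hw : Continuous w)
    (hper : ∀ x (j : Fin d), w (x + Pi.single j 1) = w x) (y : Fin d → ℝ) :
    (∫ s in unitCube d, w (y + s)) = ∫ s in unitCube d, w s := by
  classical
  set b := Pi.basisFun ℝ (Fin d) with hb
  set F := ZSpan.fundamentalDomain b with hF
  have hFev : F = Set.univ.pi fun _ => Set.Ico (0 : ℝ) 1 := by
    ext z
    simp [hF, hb, ZSpan.fundamentalDomain, Pi.basisFun_repr, Set.mem_pi]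
  have hFmeas : MeasurableSet F := by
    rw [hFev]; exact MeasurableSet.univ_pi fun _ => measurableSet_Ico
  have hFae : F =ᵐ[(volume : Measure (Fin d → ℝ))] unitCube d := by
    have hcube : unitCube d = Set.Icc (0 : Fin d → ℝ) 1 := by
      rw [unitCube, ← Set.pi_univ_Icc]
      rfl
    rw [hFev, hcube]
    exact Measure.univ_pi_Ico_ae_eq_Icc
  -- invariance of w under the lattice
  have hinv : ∀ (g : (Submodule.span ℤ (Set.range ⇑b)).toAddSubgroup) (x : Fin d → ℝ),
      w (g +ᵥ x) = w x := by
    rintro ⟨v, hv⟩ x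
    have hv' := (b.mem_span_iff_repr_mem ℤ v).mp hv
    choose m hm using hv'
    have hveq : v = fun i => (m i : ℝ) := by
      funext i
      have h1 := hm i
      rw [hb, Pi.basisFun_repr] at h1
      exact h1.symm
    show w (v + x) = w x
    rw [add_comm, hveq]
    exact per_int hper m x
  -- fundamental domains
  have hfd : IsAddFundamentalDomain (Submodule.span ℤ (Set.range ⇑b)).toAddSubgroup F volume :=
    ZSpan.isAddFundamentalDomain' b volume
  have hfd2 : IsAddFundamentalDomain (Submodule.span ℤ (Set.range ⇑b)).toAddSubgroup
      (y +ᵥ F) volume := hfd.vadd_of_comm y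
  haveI : Countable (Submodule.span ℤ (Set.range ⇑b)).toAddSubgroup := by
    have : Countable (Submodule.span ℤ (Set.range ⇑b)) := inferInstance
    exact this
  have key : ∫ t in (y +ᵥ F), w t = ∫ t in F, w t := hfd2.setIntegral_eq hfd hinv
  -- change of variables
  have hchange : (∫ s in F, w (y + s)) = ∫ t in (y +ᵥ F), w t := by
    have hmeas2 : MeasurableSet (y +ᵥ F) := hFmeas.const_vadd y
    rw [← integral_indicator hFmeas, ← integral_indicator hmeas2]
    rw [← integral_add_left_eq_self (fun t => Set.indicator (y +ᵥ F) w t) y]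
    congr 1
    funext s
    by_cases hs : s ∈ F
    · rw [Set.indicator_of_mem hs]
      have hmem : y + s ∈ y +ᵥ F := by
        have := Set.vadd_mem_vadd_set (a := y) hs
        simpa [vadd_eq_add] using this
      exact (Set.indicator_of_mem hmem w).symm
    · rw [Set.indicator_of_notMem hs]
      refine (Set.indicator_of_notMem ?_ w).symm
      intro hmem
      obtain ⟨t, ht, hts⟩ := Set.mem_vadd_set.1 hmem
      have hts' : y + t = y + s := hts
      exact hs (add_left_cancel hts' ▸ ht)
  calc (∫ s in unitCube d, w (y + s)) = ∫ s in F, w (y + s) :=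
        (setIntegral_congr_set hFae.symm)
    _ = ∫ t in (y +ᵥ F), w t := hchange
    _ = ∫ t in F, w t := key
    _ = ∫ s in unitCube d, w s := setIntegral_congr_set hFae


end helpers

lemma osc_tendsto (w : (Fin d → ℝ) → ℝ) (hw : Continuous w) (M : ℝ) (hM0 : 0 ≤ M)
    (hM : ∀ x, |w x| ≤ M)
    (hc : ∀ y : Fin d → ℝ, (∫ s in unitCube d, w (y + s)) = ∫ s in unitCube d, w s)
    (h : (Fin d → ℝ) → ℝ) (hh : Continuous h) (hhi : Integrable h) :
    Tendsto (fun ε : ℝ => ∫ x, h x * w (ε⁻¹ • x)) (nhdsWithin 0 (Set.Ioi 0))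
      (nhds ((∫ s in unitCube d, w s) * ∫ x, h x)) := by
  classical
  set c : ℝ := ∫ s in unitCube d, w s with hcdef
  set μc : Measure (Fin d → ℝ) := volume.restrict (unitCube d) with hμc
  have hμcuniv : μc Set.univ = 1 := by
    rw [hμc, Measure.restrict_apply_univ, unitCube_volume]
  haveI : IsFiniteMeasure μc := ⟨by rw [hμcuniv]; exact ENNReal.one_lt_top⟩
  have hμcreal : (μc Set.univ).toReal = 1 := by rw [hμcuniv]; simp
  have hwB : ∀ z, ‖w z‖ ≤ M := fun z => hM z
  have hwm : ∀ ε : ℝ, AEStronglyMeasurable (fun x : Fin d → ℝ => w (ε⁻¹ • x)) volume :=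
    fun ε => (hw.comp (continuous_const_smul _)).aestronglyMeasurable
  have hint : ∀ ε : ℝ, Integrable (fun x => h x * w (ε⁻¹ • x)) volume := by
    intro ε
    have := hhi.bdd_mul (hwm ε) (ae_of_all _ fun x => hwB _)
    simpa [mul_comm] using this
  set I : ℝ → ℝ := fun ε => ∫ x, h x * w (ε⁻¹ • x) with hIdef
  set J : ℝ → (Fin d → ℝ) → ℝ := fun ε s => ∫ x, h x * w (ε⁻¹ • x + s) with hJdef
  have hbnd : ∀ (ε : ℝ) (x s : Fin d → ℝ), ‖h x * w (ε⁻¹ • x + s)‖ ≤ ‖h x‖ * M := by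
    intro ε x s
    rw [norm_mul]
    exact mul_le_mul_of_nonneg_left (hwB _) (norm_nonneg _)
  have hxint : ∀ (ε : ℝ) (x : Fin d → ℝ),
      Integrable (fun s => h x * w (ε⁻¹ • x + s)) μc := by
    intro ε x
    have hcont' : Continuous fun s : Fin d → ℝ => h x * w (ε⁻¹ • x + s) :=
      continuous_const.mul (hw.comp (continuous_const.add continuous_id))
    exact (integrable_const (‖h x‖ * M)).mono' hcont'.aestronglyMeasurable
      (ae_of_all _ fun s => hbnd ε x s)
  -- Fubini integrability
  have huncur : ∀ ε : ℝ, Integrable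
      (Function.uncurry fun x s => h x * w (ε⁻¹ • x + s)) (volume.prod μc) := by
    intro ε
    have hcont : Continuous (Function.uncurry fun x s : Fin d → ℝ => h x * w (ε⁻¹ • x + s)) :=
      (hh.comp continuous_fst).mul
        (hw.comp (((continuous_const_smul _).comp continuous_fst).add continuous_snd))
    refine (integrable_prod_iff hcont.aestronglyMeasurable).2 ⟨?_, ?_⟩
    · exact ae_of_all _ fun x => hxint ε x
    · have hasm : AEStronglyMeasurable
          (fun x => ∫ s, ‖h x * w (ε⁻¹ • x + s)‖ ∂μc) volume :=
        hcont.norm.aestronglyMeasurable.integral_prod_right'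
      refine (hhi.norm.mul_const M).mono' hasm (ae_of_all _ fun x => ?_)
      simp only [Function.uncurry_apply_pair]
      have hnn : 0 ≤ ∫ s, ‖h x * w (ε⁻¹ • x + s)‖ ∂μc :=
        integral_nonneg fun s => norm_nonneg _
      rw [Real.norm_of_nonneg hnn]
      calc ∫ s, ‖h x * w (ε⁻¹ • x + s)‖ ∂μc ≤ ∫ _, ‖h x‖ * M ∂μc :=
            integral_mono ((hxint ε x).norm) (integrable_const _) (hbnd ε x)
        _ = ‖h x‖ * M := by rw [integral_const, measureReal_def, hμcreal, one_smul]
  -- Claim A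
  have hA : ∀ ε : ℝ, ∫ s, J ε s ∂μc = c * ∫ x, h x := by
    intro ε
    rw [hJdef]
    rw [← integral_integral_swap (huncur ε)]
    have : ∀ x, ∫ s, h x * w (ε⁻¹ • x + s) ∂μc = h x * c := by
      intro x
      rw [integral_const_mul, hμc]
      congr 1
      exact hc (ε⁻¹ • x)
    rw [integral_congr_ae (ae_of_all _ this), integral_mul_const, mul_comm]
  -- substitution
  have hsub : ∀ ε : ℝ, ε ≠ 0 → ∀ s : Fin d → ℝ,
      J ε s = ∫ x, h (x - ε • s) * w (ε⁻¹ • x) := by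
    intro ε hε s
    have key := integral_add_right_eq_self (μ := volume)
      (fun y => h (y - ε • s) * w (ε⁻¹ • y)) (ε • s)
    simp only [hJdef]
    refine Eq.trans ?_ key
    refine integral_congr_ae (ae_of_all _ fun x => ?_)
    show h x * w (ε⁻¹ • x + s) = h (x + ε • s - ε • s) * w (ε⁻¹ • (x + ε • s))
    rw [add_sub_cancel_right]
    congr 2
    rw [smul_add, smul_smul, inv_mul_cancel₀ hε, one_smul]
  have htrans_int : ∀ v : Fin d → ℝ, Integrable (fun x => h (x - v)) volume :=
    fun v => hhi.comp_sub_right v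
  -- L¹ continuity of translation
  set H : Lp ℝ 1 (volume : Measure (Fin d → ℝ)) := hhi.toL1 h with hH
  set TC : C((Fin d → ℝ), C((Fin d → ℝ), (Fin d → ℝ))) :=
    ContinuousMap.curry ⟨fun p => p.2 - p.1, by fun_prop⟩ with hTC
  have hTm : ∀ v, MeasurePreserving (TC v) volume volume := by
    intro v
    have : (TC v : (Fin d → ℝ) → (Fin d → ℝ)) = fun x => x + (-v) := by
      funext x
      show x - v = x + (-v)
      rw [sub_eq_add_neg]
    rw [this]
    exact measurePreserving_add_right volume (-v)
  set T : (Fin d → ℝ) → Lp ℝ 1 (volume : Measure (Fin d → ℝ)) :=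
    fun v => Lp.compMeasurePreserving (TC v) (hTm v) H with hT
  have hTcont : Tendsto T (nhds 0) (nhds (T 0)) := by
    refine Filter.Tendsto.compMeasurePreservingLp tendsto_const_nhds ?_ hTm (hTm 0) ENNReal.one_ne_top
    exact TC.continuous.tendsto 0
  set φ : (Fin d → ℝ) → ℝ := fun v => ‖T 0 - T v‖ with hφ
  have hφ0 : Tendsto φ (nhds 0) (nhds 0) := by
    have := ((tendsto_const_nhds (x := T 0)).sub hTcont).norm
    simpa [hφ] using this
  have hTv : ∀ v, (T v : (Fin d → ℝ) → ℝ) =ᵐ[volume] fun x => h (x - v) := by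
    intro v
    have h1 := Lp.coeFn_compMeasurePreserving H (hTm v)
    refine h1.trans ?_
    have h2 : (H : (Fin d → ℝ) → ℝ) =ᵐ[volume] h := hhi.coeFn_toL1
    have h3 : ((H : (Fin d → ℝ) → ℝ) ∘ (TC v)) =ᵐ[volume] (h ∘ (TC v)) :=
      (hTm v).quasiMeasurePreserving.ae_eq_comp h2
    refine h3.trans (ae_of_all _ fun x => ?_)
    show h (x - v) = h (x - v)
    rfl
  have hφeq : ∀ v, (∫ x, ‖h x - h (x - v)‖) = φ v := by
    intro v
    show (∫ x, ‖h x - h (x - v)‖) = ‖T 0 - T v‖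
    rw [L1.norm_eq_integral_norm]
    refine integral_congr_ae ?_
    have h1 := Lp.coeFn_sub (T 0) (T v)
    have h2 := hTv 0
    have h3 := hTv v
    filter_upwards [h1, h2, h3] with x e1 e2 e3
    rw [e1]
    show ‖h x - h (x - v)‖ = ‖(T 0 : _ → ℝ) x - (T v : _ → ℝ) x‖
    rw [e2, e3, sub_zero]
  -- Claim C
  have hC : ∀ ε : ℝ, ε ≠ 0 → ∀ s : Fin d → ℝ, ‖I ε - J ε s‖ ≤ M * φ (ε • s) := by
    intro ε hε s
    rw [hsub ε hε s]
    simp only [hIdef]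
    have hint2 : Integrable (fun x => h (x - ε • s) * w (ε⁻¹ • x)) volume := by
      have := (htrans_int (ε • s)).bdd_mul (hwm ε) (ae_of_all _ fun x => hwB _)
      simpa [mul_comm] using this
    have hdint : Integrable (fun x => (h x - h (x - ε • s)) * w (ε⁻¹ • x)) volume := by
      have := (hhi.sub (htrans_int (ε • s))).bdd_mul (hwm ε) (ae_of_all _ fun x => hwB _)
      simpa [mul_comm] using this
    rw [← integral_sub (hint ε) hint2]
    have heq : ∀ x, h x * w (ε⁻¹ • x) - h (x - ε • s) * w (ε⁻¹ • x)
        = (h x - h (x - ε • s)) * w (ε⁻¹ • x) := fun x => by ring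
    rw [integral_congr_ae (ae_of_all _ heq)]
    calc ‖∫ x, (h x - h (x - ε • s)) * w (ε⁻¹ • x)‖
        ≤ ∫ x, ‖(h x - h (x - ε • s)) * w (ε⁻¹ • x)‖ := norm_integral_le_integral_norm _
      _ ≤ ∫ x, ‖h x - h (x - ε • s)‖ * M := by
          refine integral_mono hdint.norm
            (((hhi.sub (htrans_int (ε • s))).norm.mul_const M)) fun x => ?_
          rw [norm_mul]
          exact mul_le_mul_of_nonneg_left (hwB _) (norm_nonneg _)
      _ = M * φ (ε • s) := by rw [integral_mul_const, ← hφeq (ε • s), mul_comm]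
  -- integrability of J in s
  have hJint : ∀ ε : ℝ, Integrable (J ε) μc := fun ε => (huncur ε).integral_prod_right
  have hIbound : ∀ ε : ℝ, ‖I ε‖ ≤ M * ∫ x, ‖h x‖ := by
    intro ε
    calc ‖I ε‖ ≤ ∫ x, ‖h x * w (ε⁻¹ • x)‖ := norm_integral_le_integral_norm _
      _ ≤ ∫ x, ‖h x‖ * M := by
          refine integral_mono (hint ε).norm (hhi.norm.mul_const M) fun x => ?_
          rw [norm_mul]
          exact mul_le_mul_of_nonneg_left (hwB _) (norm_nonneg _)
      _ = M * ∫ x, ‖h x‖ := by rw [integral_mul_const, mul_comm]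
  have hJbound : ∀ (ε : ℝ) (s : Fin d → ℝ), ‖J ε s‖ ≤ M * ∫ x, ‖h x‖ := by
    intro ε s
    calc ‖J ε s‖ ≤ ∫ x, ‖h x * w (ε⁻¹ • x + s)‖ := norm_integral_le_integral_norm _
      _ ≤ ∫ x, ‖h x‖ * M := by
          refine integral_mono ?_ (hhi.norm.mul_const M) fun x => hbnd ε x s
          have : Integrable (fun x => h x * w (ε⁻¹ • x + s)) volume := by
            have hm : AEStronglyMeasurable (fun x : Fin d → ℝ => w (ε⁻¹ • x + s)) volume :=
              (hw.comp ((continuous_const_smul _).add continuous_const)).aestronglyMeasurable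
            have := hhi.bdd_mul hm (ae_of_all _ fun x => hwB _)
            simpa [mul_comm] using this
          exact this.norm
      _ = M * ∫ x, ‖h x‖ := by rw [integral_mul_const, mul_comm]
  have hkey : ∀ ε : ℝ, I ε - c * ∫ x, h x = ∫ s, (I ε - J ε s) ∂μc := by
    intro ε
    rw [integral_sub (integrable_const (I ε)) (hJint ε), hA ε, integral_const, measureReal_def, hμcreal, one_smul]
  have hdc : Tendsto (fun ε => ∫ s, (I ε - J ε s) ∂μc)
      (nhdsWithin 0 (Set.Ioi 0)) (nhds 0) := by
    have hmain := tendsto_integral_filter_of_dominated_convergence (μ := μc)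
      (F := fun ε s => I ε - J ε s) (f := fun _ => (0:ℝ)) (l := nhdsWithin 0 (Set.Ioi 0))
      (fun _ => 2 * (M * ∫ x, ‖h x‖)) ?_ ?_ (integrable_const _) ?_
    · simpa using hmain
    · refine Filter.Eventually.of_forall fun ε => ?_
      have hJc : Continuous fun s => J ε s := by
        refine continuous_of_dominated (bound := fun x => ‖h x‖ * M) ?_ ?_ ?_ ?_
        · exact fun s =>
            (hh.mul (hw.comp ((continuous_const_smul _).add continuous_const))).aestronglyMeasurable
        · exact fun s => ae_of_all _ fun x => hbnd ε x s
        · exact hhi.norm.mul_const M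
        · exact ae_of_all _ fun x =>
            continuous_const.mul (hw.comp (continuous_const.add continuous_id))
      exact (continuous_const.sub hJc).aestronglyMeasurable
    · refine Filter.Eventually.of_forall fun ε => ae_of_all _ fun s => ?_
      calc ‖I ε - J ε s‖ ≤ ‖I ε‖ + ‖J ε s‖ := norm_sub_le _ _
        _ ≤ M * (∫ x, ‖h x‖) + M * ∫ x, ‖h x‖ := add_le_add (hIbound ε) (hJbound ε s)
        _ = 2 * (M * ∫ x, ‖h x‖) := by ring
    · refine ae_of_all _ fun s => ?_
      show Tendsto (fun ε => I ε - J ε s) (nhdsWithin 0 (Set.Ioi 0)) (nhds 0)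
      refine squeeze_zero_norm' (a := fun ε => M * φ (ε • s)) ?_ ?_
      · filter_upwards [self_mem_nhdsWithin] with ε hε
        exact hC ε (ne_of_gt hε) s
      · have h1 : Tendsto (fun ε : ℝ => ε • s) (nhdsWithin 0 (Set.Ioi 0)) (nhds 0) := by
          have h2 : Tendsto (fun ε : ℝ => ε • s) (nhds 0) (nhds ((0:ℝ) • s)) :=
            (continuous_id.smul continuous_const).tendsto 0
          rw [zero_smul] at h2
          exact h2.mono_left nhdsWithin_le_nhds
        have := (hφ0.comp h1).const_mul M
        simpa using this
  have hdiff : Tendsto (fun ε => I ε - c * ∫ x, h x)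
      (nhdsWithin 0 (Set.Ioi 0)) (nhds 0) := hdc.congr fun ε => (hkey ε).symm
  have hfin := hdiff.add (tendsto_const_nhds (x := c * ∫ x, h x))
  rw [zero_add] at hfin
  refine hfin.congr fun ε => ?_
  ring

/-- Let `V_ε(x) = V₀(x) + V₁(x/ε)` with `V₁ : 𝕋^d → ℝ` smooth and mean zero. For any
bounded continuous `f` with `f e^{-V₀}` and `e^{-V₀}` integrable, the normalized
integral `∫ f e^{-V_ε} / ∫ e^{-V_ε}` converges as `ε → 0⁺` to
`∫ f e^{-V₀} / ∫ e^{-V₀}` (the constant `Z̄ = ∫_{𝕋^d} e^{-V₁}` cancels). -/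
theorem stmt_6 {d : ℕ} (V₀ : (Fin d → ℝ) → ℝ) (hV₀ : Continuous V₀)
    (hV₀int : Integrable fun x => exp (-V₀ x))
    (V₁ : (Fin d → ℝ) → ℝ) (hV₁ : ContDiff ℝ (⊤ : ℕ∞) V₁)
    (hper : ∀ z (j : Fin d), V₁ (z + Pi.single j 1) = V₁ z)
    (hmean : (∫ z in unitCube d, V₁ z) = 0)
    (f : (Fin d → ℝ) → ℝ) (hf : Continuous f) (Bf : ℝ) (hfB : ∀ x, |f x| ≤ Bf)
    (hfint : Integrable fun x => f x * exp (-V₀ x)) :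
    Tendsto (fun ε : ℝ =>
        (∫ x, f x * exp (-(V₀ x + V₁ (ε⁻¹ • x)))) / (∫ x, exp (-(V₀ x + V₁ (ε⁻¹ • x)))))
      (nhdsWithin 0 (Set.Ioi 0))
      (nhds ((∫ x, f x * exp (-V₀ x)) / (∫ x, exp (-V₀ x)))) := by
  classical
  set w : (Fin d → ℝ) → ℝ := fun z => exp (-V₁ z) with hwdef
  have hwc : Continuous w := (hV₁.continuous.neg).rexp
  have hwper : ∀ x (j : Fin d), w (x + Pi.single j 1) = w x := fun x j => by
    simp only [hwdef, hper]
  obtain ⟨M, hM0, hM⟩ := per_bound hwc hwper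
  have hc := per_integral_translate hwc hwper
  set c : ℝ := ∫ s in unitCube d, w s with hcdef
  have hcpos : 0 < c := by
    have hKex := (unitCube_compact d).exists_isMaxOn
      ⟨0, fun i _ => Set.mem_Icc.2 ⟨le_refl _, zero_le_one⟩⟩ hV₁.continuous.continuousOn
    obtain ⟨z, hz, hzmax⟩ := hKex
    have hint : IntegrableOn w (unitCube d) volume :=
      hwc.continuousOn.integrableOn_compact (unitCube_compact d)
    have hmono : ∀ x ∈ unitCube d, exp (-V₁ z) ≤ w x := fun x hx =>
      exp_le_exp.2 (neg_le_neg (hzmax hx))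
    have hge := setIntegral_ge_of_const_le (c := exp (-V₁ z)) (unitCube_measurableSet d)
      (by rw [unitCube_volume]; exact ENNReal.one_ne_top) hmono hint
    have hvol : (volume (unitCube d)).toReal = 1 := by rw [unitCube_volume]; simp
    rw [measureReal_def, hvol, smul_eq_mul, one_mul] at hge
    exact lt_of_lt_of_le (exp_pos _) hge
  have hBpos : 0 < ∫ x, exp (-V₀ x) := by
    rw [integral_pos_iff_support_of_nonneg_ae (ae_of_all _ fun x => (exp_pos _).le) hV₀int]
    have : Function.support (fun x => exp (-V₀ x)) = Set.univ :=
      Set.eq_univ_of_forall fun x => (exp_pos _).ne'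
    rw [this]
    exact Measure.measure_univ_pos.2 (NeZero.ne _)
  -- rewrite integrands
  have hnum : Tendsto (fun ε : ℝ => ∫ x, f x * exp (-(V₀ x + V₁ (ε⁻¹ • x))))
      (nhdsWithin 0 (Set.Ioi 0)) (nhds (c * ∫ x, f x * exp (-V₀ x))) := by
    have := osc_tendsto w hwc M hM0 hM hc (fun x => f x * exp (-V₀ x))
      (hf.mul (hV₀.neg.rexp)) hfint
    refine this.congr fun ε => ?_
    refine integral_congr_ae (ae_of_all _ fun x => ?_)
    simp only [hwdef, neg_add, Real.exp_add]
    all_goals ring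
  have hden : Tendsto (fun ε : ℝ => ∫ x, exp (-(V₀ x + V₁ (ε⁻¹ • x))))
      (nhdsWithin 0 (Set.Ioi 0)) (nhds (c * ∫ x, exp (-V₀ x))) := by
    have := osc_tendsto w hwc M hM0 hM hc (fun x => exp (-V₀ x))
      (hV₀.neg.rexp) hV₀int
    refine this.congr fun ε => ?_
    refine integral_congr_ae (ae_of_all _ fun x => ?_)
    simp only [hwdef, neg_add, Real.exp_add]
    all_goals ring
  have hlim := hnum.div hden (by positivity)
  have : c * (∫ x, f x * exp (-V₀ x)) / (c * ∫ x, exp (-V₀ x))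
      = (∫ x, f x * exp (-V₀ x)) / (∫ x, exp (-V₀ x)) :=
    mul_div_mul_left _ _ hcpos.ne'
  rwa [this] at hlim
end

section
/- For the quadratic cost V(x) = ½⟨y - Ax, Γ⁻¹(y - Ax)⟩ + ½⟨x, Σ⁻¹x⟩ with A linear, the preconditioned gradient flow drift -C∇V(x) equals the EKS drift -∫⟨A(X'−X̄), A x − y⟩_Γ X' π(X')dX' − C Σ⁻¹ x whenever π has mean X̄ and covariance C, i.e. ∫⟨A(X'−X̄), Ax − y⟩_Γ X' π(X')dX' = C Aᵀ Γ⁻¹(Ax − y). -/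
/-!
With `u = Aᵀ Γ⁻¹ (A x - y)`, adjointness turns the integrand into `π x' ⟨x' - X̄, u⟩ x'`, which is
`(π x' • (x' ⊗ (x' - X̄))) u`. Centering the left factor `x'` changes the matrix integral by
`X̄ ⊗ ∫ π x' (x' - X̄)`, which vanishes because `X̄` is the mean of the unit-mass density `π`;
what remains is `C u`.
-/

open Matrix MeasureTheory

attribute [local instance] Matrix.frobeniusNormedAddCommGroup Matrix.frobeniusNormedSpace

section SecondMoment

variable {E F : Type*} [NormedAddCommGroup E] [NormedSpace ℝ E] [NormedAddCommGroup F]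
  [NormedSpace ℝ F] [MeasurableSpace E] {μ : Measure E} {ρ : E → ℝ}

theorem integrable_smul_bilin_sub_right (B : E →L[ℝ] E →L[ℝ] F)
    (h1 : Integrable (fun x => ρ x • x) μ) (h2 : Integrable (fun x => ρ x • B x x) μ) (b : E) :
    Integrable (fun x => ρ x • B x (x - b)) μ := by
  have expand : (fun x => ρ x • B x (x - b)) = fun x => ρ x • B x x - B.flip b (ρ x • x) := by
    ext x
    simp only [map_sub, map_smul, ContinuousLinearMap.flip_apply, smul_sub]
  rw [expand]
  exact h2.sub ((B.flip b).integrable_comp h1)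

variable [CompleteSpace E] {x₀ : E}

theorem integral_smul_sub_mean (hρ1 : ∫ x, ρ x ∂μ = 1)
    (h1 : Integrable (fun x => ρ x • x) μ) (hx₀ : x₀ = ∫ x, ρ x • x ∂μ) :
    ∫ x, ρ x • (x - x₀) ∂μ = 0 := by
  have hρ : Integrable ρ μ := Integrable.of_integral_ne_zero (by simp [hρ1])
  simp only [smul_sub]
  rw [integral_sub h1 (hρ.smul_const _), integral_smul_const, hρ1, one_smul, hx₀, sub_self]

theorem integral_smul_bilin_sub_mean [CompleteSpace F]
    (B : E →L[ℝ] E →L[ℝ] F) (hρ1 : ∫ x, ρ x ∂μ = 1) (h1 : Integrable (fun x => ρ x • x) μ)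
    (h2 : Integrable (fun x => ρ x • B x x) μ) (hx₀ : x₀ = ∫ x, ρ x • x ∂μ) :
    ∫ x, ρ x • B x (x - x₀) ∂μ = ∫ x, ρ x • B (x - x₀) (x - x₀) ∂μ := by
  have hρ : Integrable ρ μ := Integrable.of_integral_ne_zero (by simp [hρ1])
  have hcentered : Integrable (fun x => ρ x • (x - x₀)) μ := by
    simp_rw [smul_sub]
    exact h1.sub (hρ.smul_const x₀)
  have split : (fun x => ρ x • B (x - x₀) (x - x₀)) = fun x =>
      ρ x • B x (x - x₀) - B x₀ (ρ x • (x - x₀)) := by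
    ext x
    simp only [map_sub, _root_.sub_apply, map_smul, smul_sub]
    abel
  rw [split, integral_sub (integrable_smul_bilin_sub_right B h1 h2 x₀)
    ((B x₀).integrable_comp hcentered), (B x₀).integral_comp_comm hcentered,
    integral_smul_sub_mean hρ1 h1 hx₀, map_zero, sub_zero]

end SecondMoment

namespace Matrix

variable {m n : Type*} [Fintype m] [Fintype n]

noncomputable def vecMulVecCLM : (m → ℝ) →L[ℝ] (n → ℝ) →L[ℝ] Matrix m n ℝ :=
  LinearMap.toContinuousLinearMap
    (LinearMap.toContinuousLinearMap.toLinearMap ∘ₗ vecMulVecBilin ℝ ℝ)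

noncomputable def mulVecCLM (v : n → ℝ) : Matrix m n ℝ →L[ℝ] m → ℝ :=
  LinearMap.toContinuousLinearMap ((mulVecBilin ℝ ℝ).flip v)

-- `Matrix` carries its own topology, not the Frobenius one, so `ContinuousENorm` is not found
-- by instance search and has to be given explicitly.
theorem integral_mul_dotProduct_sub_mean_smul {μ : Measure (n → ℝ)} {ρ : (n → ℝ) → ℝ}
    (hρ1 : ∫ x, ρ x ∂μ = 1) (h1 : Integrable (fun x => ρ x • x) μ)
    (h2 : @Integrable (Matrix n n ℝ) _ SeminormedAddGroup.toContinuousENorm _ _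
      (fun x => ρ x • vecMulVec x x) μ)
    {x₀ : n → ℝ} (hx₀ : x₀ = ∫ x, ρ x • x ∂μ) (u : n → ℝ) :
    ∫ x, (ρ x * ((x - x₀) ⬝ᵥ u)) • x ∂μ
      = (∫ x, ρ x • vecMulVec (x - x₀) (x - x₀) ∂μ) *ᵥ u := by
  have pointwise : ∀ x,
      (ρ x * ((x - x₀) ⬝ᵥ u)) • x = mulVecCLM u (ρ x • vecMulVecCLM x (x - x₀)) := fun x => by
    change _ = (ρ x • vecMulVec x (x - x₀)) *ᵥ u
    rw [smul_mulVec, vecMulVec_mulVec, op_smul_eq_smul, smul_smul]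
  simp only [pointwise]
  exact ((mulVecCLM u).integral_comp_comm
    (integrable_smul_bilin_sub_right vecMulVecCLM h1 h2 x₀)).trans
    (congrArg (mulVecCLM u) (integral_smul_bilin_sub_mean vecMulVecCLM hρ1 h1 h2 hx₀))

end Matrix

theorem stmt_14_general {d K : ℕ} (A : Matrix (Fin K) (Fin d) ℝ)
    (Γ : Matrix (Fin K) (Fin K) ℝ) (y : Fin K → ℝ)
    (π : (Fin d → ℝ) → ℝ) (hπ1 : (∫ x', π x') = 1)
    (h1 : Integrable fun x' => π x' • x')
    (h2 : @Integrable (Matrix (Fin d) (Fin d) ℝ) _ SeminormedAddGroup.toContinuousENorm _ _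
      (fun x' : Fin d → ℝ => π x' • vecMulVec x' x') volume)
    (Xbar : Fin d → ℝ) (hXbar : Xbar = ∫ x', π x' • x')
    (C : Matrix (Fin d) (Fin d) ℝ)
    (hC : C = ∫ x', π x' • vecMulVec (x' - Xbar) (x' - Xbar)) :
    ∀ x : Fin d → ℝ,
      (∫ x', (π x' * ((A *ᵥ (x' - Xbar)) ⬝ᵥ (Γ⁻¹ *ᵥ (A *ᵥ x - y)))) • x')
        = (C * Aᵀ * Γ⁻¹) *ᵥ (A *ᵥ x - y) := by
  intro x
  have adjoint : ∀ w, (A *ᵥ w) ⬝ᵥ (Γ⁻¹ *ᵥ (A *ᵥ x - y)) = w ⬝ᵥ (Aᵀ *ᵥ Γ⁻¹ *ᵥ (A *ᵥ x - y)) :=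
    fun w => by rw [dotProduct_mulVec w Aᵀ, vecMul_transpose]
  simp only [adjoint]
  rw [integral_mul_dotProduct_sub_mean_smul hπ1 h1 h2 hXbar, ← hC, mulVec_mulVec, mulVec_mulVec]

/-- For a linear forward map `A`, the EKS drift term equals the covariance-
preconditioned Langevin drift: if `π` has mean `X̄` and covariance `C`, then
`∫⟨A(X'−X̄), Ax − y⟩_Γ X' π(X')dX' = C Aᵀ Γ⁻¹(Ax − y)`. -/
theorem stmt_14 {d K : ℕ} (A : Matrix (Fin K) (Fin d) ℝ)
    (Γ : Matrix (Fin K) (Fin K) ℝ) (hΓ : Γ.PosDef) (y : Fin K → ℝ)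
    (π : (Fin d → ℝ) → ℝ) (hπ : ∀ x, 0 ≤ π x) (hπ1 : (∫ x', π x') = 1)
    (h1 : Integrable fun x' => π x' • x')
    (h2 : @Integrable (Matrix (Fin d) (Fin d) ℝ) _ SeminormedAddGroup.toContinuousENorm _ _
      (fun x' : Fin d → ℝ => π x' • vecMulVec x' x') volume)
    (Xbar : Fin d → ℝ) (hXbar : Xbar = ∫ x', π x' • x')
    (C : Matrix (Fin d) (Fin d) ℝ)
    (hC : C = ∫ x', π x' • vecMulVec (x' - Xbar) (x' - Xbar)) :
    ∀ x : Fin d → ℝ,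
      (∫ x', (π x' * ((A *ᵥ (x' - Xbar)) ⬝ᵥ (Γ⁻¹ *ᵥ (A *ᵥ x - y)))) • x')
        = (C * Aᵀ * Γ⁻¹) *ᵥ (A *ᵥ x - y) :=
  stmt_14_general A Γ y π hπ1 h1 h2 Xbar hXbar C hC
end
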